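/- arXiv:2403.02834 — 2 statements merged into one kernel-verified Lean document; each statement's English description precedes it below -/
import Mathlib

section
/- Let Û₀, V̂₀ have orthonormal columns and suppose F satisfies ⟨Z, F(t,Z)⟩ = 0 for all Z. If S̄(t) solves the Galerkin equation S̄'(t) = Û₀ᵀ F(t, Û₀ S̄(t) V̂₀ᵀ) V̂₀, then ‖S̄(t)‖_F is constant in t. -/
open Matrix

noncomputable def fro {m n : ℕ} (A : Matrix (Fin m) (Fin n) ℝ) : ℝ :=
  Real.sqrt (Matrix.trace (Aᵀ * A))

/-! The squared Frobenius norm `trace (S̄ᵀ S̄)` has derivative `2 ⟨S̄, Û₀ᵀ F(t, Û₀ S̄ V̂₀ᵀ) V̂₀⟩`,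
and moving `Û₀` and `V̂₀` across the Frobenius inner product turns this into
`2 ⟨Û₀ S̄ V̂₀ᵀ, F(t, Û₀ S̄ V̂₀ᵀ)⟩ = 0`. -/

namespace Matrix

variable {ι κ μ ν R : Type*} [Fintype ι] [Fintype κ] [Fintype μ] [Fintype ν]

theorem trace_transpose_mul_eq_sum [NonUnitalNonAssocSemiring R] (A B : Matrix ι κ R) :
    trace (Aᵀ * B) = ∑ i, ∑ j, A i j * B i j := by
  simp only [trace, diag, mul_apply, transpose_apply]
  exact Finset.sum_comm

theorem trace_transpose_mul_sandwich [CommSemiring R] (U : Matrix μ ι R) (V : Matrix ν κ R)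
    (S : Matrix ι κ R) (G : Matrix μ ν R) :
    trace (Sᵀ * (Uᵀ * G * V)) = trace ((U * S * Vᵀ)ᵀ * G) := by
  rw [← Matrix.mul_assoc, trace_mul_comm, transpose_mul, transpose_mul, transpose_transpose]
  simp only [Matrix.mul_assoc]

theorem hasDerivAt_trace_transpose_mul_self {S : ℝ → Matrix ι κ ℝ} {S' : Matrix ι κ ℝ} {t : ℝ}
    (hS : ∀ i j, HasDerivAt (fun s => S s i j) (S' i j) t) :
    HasDerivAt (fun s => trace ((S s)ᵀ * S s)) (2 * trace ((S t)ᵀ * S')) t := by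
  simp only [trace_transpose_mul_eq_sum, Finset.mul_sum]
  refine HasDerivAt.fun_sum fun i _ => HasDerivAt.fun_sum fun j _ => ?_
  exact ((hS i j).mul (hS i j)).congr_deriv (by ring)

theorem trace_transpose_mul_self_eq_of_orthogonal_deriv {S S' : ℝ → Matrix ι κ ℝ}
    (hS : ∀ t i j, HasDerivAt (fun s => S s i j) (S' t i j) t)
    (horth : ∀ t, trace ((S t)ᵀ * S' t) = 0) (t s : ℝ) :
    trace ((S t)ᵀ * S t) = trace ((S s)ᵀ * S s) := by
  have hderiv : ∀ u, HasDerivAt (fun s => trace ((S s)ᵀ * S s)) 0 u := fun u => by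
    simpa [horth u] using hasDerivAt_trace_transpose_mul_self (hS u)
  exact is_const_of_deriv_eq_zero (fun u => (hderiv u).differentiableAt)
    (fun u => (hderiv u).deriv) t s

end Matrix

theorem galerkin_norm_constant_general (m n p : ℕ)
    (Uh₀ : Matrix (Fin m) (Fin p) ℝ) (Vh₀ : Matrix (Fin n) (Fin p) ℝ)
    (F : ℝ → Matrix (Fin m) (Fin n) ℝ → Matrix (Fin m) (Fin n) ℝ)
    (hF : ∀ t (Z : Matrix (Fin m) (Fin n) ℝ), Matrix.trace (Zᵀ * F t Z) = 0)
    (Sb : ℝ → Matrix (Fin p) (Fin p) ℝ)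
    (hS : ∀ t i j, HasDerivAt (fun s => Sb s i j)
      ((Uh₀ᵀ * F t (Uh₀ * Sb t * Vh₀ᵀ) * Vh₀) i j) t) :
    ∀ t s : ℝ, fro (Sb t) = fro (Sb s) := by
  intro t s
  unfold fro
  congr 1
  refine trace_transpose_mul_self_eq_of_orthogonal_deriv hS (fun u => ?_) t s
  rw [trace_transpose_mul_sandwich, hF]

theorem galerkin_norm_constant (m n p : ℕ)
    (Uh₀ : Matrix (Fin m) (Fin p) ℝ) (Vh₀ : Matrix (Fin n) (Fin p) ℝ)
    (hUh₀ : Uh₀ᵀ * Uh₀ = 1) (hVh₀ : Vh₀ᵀ * Vh₀ = 1)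
    (F : ℝ → Matrix (Fin m) (Fin n) ℝ → Matrix (Fin m) (Fin n) ℝ)
    (hF : ∀ t (Z : Matrix (Fin m) (Fin n) ℝ), Matrix.trace (Zᵀ * F t Z) = 0)
    (Sb : ℝ → Matrix (Fin p) (Fin p) ℝ)
    (hS : ∀ t i j, HasDerivAt (fun s => Sb s i j)
      ((Uh₀ᵀ * F t (Uh₀ * Sb t * Vh₀ᵀ) * Vh₀) i j) t) :
    ∀ t s : ℝ, fro (Sb t) = fro (Sb s) :=
  galerkin_norm_constant_general m n p Uh₀ Vh₀ F hF Sb hS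
end

section
/- Let P^⊥ = I − Û₁ Û₁ᵀ where Û₁ has orthonormal columns spanning a subspace containing the columns of both Û₀ and K(t₁). If F is L-Lipschitz in its second argument and K(t₁) = K(t₀) + h F(t_{1/2}, Y_{1/2}) V̂₀ + E with ‖E‖ ≤ c h³, Û₀ᵀ columns contain those of K(t₀), and V̂₀ has orthonormal columns, then h‖P^⊥ F(t_{1/2}, Ŷ_*) V̂₀ V̂₀ᵀ‖ ≤ h L ‖Ŷ_* − Y_{1/2}‖ + c h³ for any matrix Ŷ_*. -/
open Matrix

/-! Since `P^⊥` annihilates `K(t₀)` and `K(t₁)`, the step equation gives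
`h P^⊥ F(t_{1/2}, Y_{1/2}) V̂₀ = -P^⊥ E`. Hence
`h P^⊥ F(t_{1/2}, Ŷ_*) V̂₀ = h P^⊥ (F(t_{1/2}, Ŷ_*) - F(t_{1/2}, Y_{1/2})) V̂₀ - P^⊥ E`, and the bound
follows from the Lipschitz property, because neither the orthogonal projector `P^⊥` nor `V̂₀`, `V̂₀ᵀ`
(orthonormal columns) increases the Frobenius norm. -/

attribute [local instance] Matrix.frobeniusNormedAddCommGroup Matrix.frobeniusNormedSpace

section Frobenius

variable {l m n : Type*} [Fintype l] [Fintype m] [Fintype n]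

theorem frobenius_norm_sq_eq_trace (A : Matrix m n ℝ) : ‖A‖ ^ 2 = trace (Aᵀ * A) := by
  rw [frobenius_norm_def, ← Real.sqrt_eq_rpow, Real.sq_sqrt (by positivity), trace,
    Finset.sum_comm]
  simp [mul_apply, sq]

theorem frobenius_norm_mul_of_orthonormal [DecidableEq m] (V : Matrix l m ℝ) (hV : Vᵀ * V = 1)
    (A : Matrix m n ℝ) : ‖V * A‖ = ‖A‖ := by
  refine (sq_eq_sq₀ (norm_nonneg _) (norm_nonneg _)).1 ?_
  rw [frobenius_norm_sq_eq_trace, frobenius_norm_sq_eq_trace, transpose_mul, Matrix.mul_assoc,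
    ← Matrix.mul_assoc Vᵀ, hV, Matrix.one_mul]

theorem frobenius_norm_mul_transpose_of_orthonormal [DecidableEq n] (V : Matrix l n ℝ)
    (hV : Vᵀ * V = 1) (A : Matrix m n ℝ) : ‖A * Vᵀ‖ = ‖A‖ := by
  rw [← frobenius_norm_transpose, transpose_mul, transpose_transpose,
    frobenius_norm_mul_of_orthonormal V hV, frobenius_norm_transpose]

theorem frobenius_norm_mul_le_of_isIdempotentElem [DecidableEq m] {P : Matrix m m ℝ}
    (hPT : Pᵀ = P) (hP : IsIdempotentElem P) (A : Matrix m n ℝ) : ‖P * A‖ ≤ ‖A‖ := by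
  have gram {Q : Matrix m m ℝ} (hQT : Qᵀ = Q) (hQ : IsIdempotentElem Q) :
      (Q * A)ᵀ * (Q * A) = Aᵀ * (Q * A) := by
    rw [transpose_mul, hQT, Matrix.mul_assoc, ← Matrix.mul_assoc Q, hQ.eq]
  have hPT' : (1 - P)ᵀ = 1 - P := by rw [transpose_sub, transpose_one, hPT]
  have pythagoras : ‖A‖ ^ 2 = ‖P * A‖ ^ 2 + ‖(1 - P) * A‖ ^ 2 := by
    rw [frobenius_norm_sq_eq_trace, frobenius_norm_sq_eq_trace, frobenius_norm_sq_eq_trace,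
      gram hPT hP, gram hPT' hP.one_sub, ← trace_add, ← Matrix.mul_add, ← Matrix.add_mul,
      add_sub_cancel, Matrix.one_mul]
  refine (pow_le_pow_iff_left₀ (norm_nonneg _) (norm_nonneg _) two_ne_zero).1 ?_
  rw [pythagoras]
  exact le_add_of_nonneg_right (sq_nonneg _)

theorem isIdempotentElem_mul_transpose_of_orthonormal [DecidableEq n] {U : Matrix m n ℝ}
    (hU : Uᵀ * U = 1) : IsIdempotentElem (U * Uᵀ) := by
  rw [IsIdempotentElem, Matrix.mul_assoc, ← Matrix.mul_assoc Uᵀ, hU, Matrix.one_mul]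

theorem frobenius_norm_one_sub_mul_transpose_mul_le [DecidableEq m] [DecidableEq n]
    {U : Matrix m n ℝ} (hU : Uᵀ * U = 1) (A : Matrix m l ℝ) : ‖(1 - U * Uᵀ) * A‖ ≤ ‖A‖ :=
  frobenius_norm_mul_le_of_isIdempotentElem (by simp)
    (isIdempotentElem_mul_transpose_of_orthonormal hU).one_sub A

theorem frobenius_norm_mul_le_of_orthonormal [DecidableEq m] [DecidableEq n] {V : Matrix m n ℝ}
    (hV : Vᵀ * V = 1) (A : Matrix l m ℝ) : ‖A * V‖ ≤ ‖A‖ := by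
  calc ‖A * V‖ = ‖(V * Vᵀ) * Aᵀ‖ := by
        rw [← frobenius_norm_mul_transpose_of_orthonormal V hV, ← frobenius_norm_transpose,
          transpose_mul, transpose_mul, transpose_transpose, Matrix.mul_assoc]
    _ ≤ ‖Aᵀ‖ := frobenius_norm_mul_le_of_isIdempotentElem (by simp)
        (isIdempotentElem_mul_transpose_of_orthonormal hV) Aᵀ
    _ = ‖A‖ := frobenius_norm_transpose A

end Frobenius

theorem fro_eq_frobenius_norm {m n : ℕ} (A : Matrix (Fin m) (Fin n) ℝ) : fro A = ‖A‖ := by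
  rw [fro, ← frobenius_norm_sq_eq_trace, Real.sqrt_sq (norm_nonneg A)]

theorem perp_projection_bound_general (m n p q : ℕ) (h L c thalf : ℝ)
    (hh : 0 < h)
    (Uh₁ : Matrix (Fin m) (Fin q) ℝ) (hUh₁ : Uh₁ᵀ * Uh₁ = 1)
    (Vh₀ : Matrix (Fin n) (Fin p) ℝ) (hVh₀ : Vh₀ᵀ * Vh₀ = 1)
    (F : ℝ → Matrix (Fin m) (Fin n) ℝ → Matrix (Fin m) (Fin n) ℝ)
    (hLip : ∀ t (Z W : Matrix (Fin m) (Fin n) ℝ),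
      fro (F t Z - F t W) ≤ L * fro (Z - W))
    (K₀ K₁ E : Matrix (Fin m) (Fin p) ℝ)
    (Yhalf : Matrix (Fin m) (Fin n) ℝ)
    (hK₀ : (1 - Uh₁ * Uh₁ᵀ) * K₀ = 0)
    (hK₁ : (1 - Uh₁ * Uh₁ᵀ) * K₁ = 0)
    (hKstep : K₁ = K₀ + h • (F thalf Yhalf * Vh₀) + E)
    (hE : fro E ≤ c * h ^ 3) :
    ∀ Yhstar : Matrix (Fin m) (Fin n) ℝ,
      h * fro ((1 - Uh₁ * Uh₁ᵀ) * F thalf Yhstar * (Vh₀ * Vh₀ᵀ)) ≤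
        h * L * fro (Yhstar - Yhalf) + c * h ^ 3 := by
  intro Yhstar
  simp only [fro_eq_frobenius_norm] at hLip hE ⊢
  set P := 1 - Uh₁ * Uh₁ᵀ
  have hPE : h • (P * F thalf Yhalf * Vh₀) = -(P * E) := by
    rw [hKstep, Matrix.mul_add, Matrix.mul_add, hK₀, zero_add, Matrix.mul_smul] at hK₁
    rw [Matrix.mul_assoc, eq_neg_iff_add_eq_zero, hK₁]
  have hLipP : ‖P * (F thalf Yhstar - F thalf Yhalf) * Vh₀‖ ≤ L * ‖Yhstar - Yhalf‖ :=
    calc _ ≤ ‖P * (F thalf Yhstar - F thalf Yhalf)‖ :=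
          frobenius_norm_mul_le_of_orthonormal hVh₀ _
      _ ≤ ‖F thalf Yhstar - F thalf Yhalf‖ := frobenius_norm_one_sub_mul_transpose_mul_le hUh₁ _
      _ ≤ L * ‖Yhstar - Yhalf‖ := hLip _ _ _
  calc h * ‖P * F thalf Yhstar * (Vh₀ * Vh₀ᵀ)‖
      = ‖h • (P * F thalf Yhstar * Vh₀)‖ := by
        rw [← Matrix.mul_assoc, frobenius_norm_mul_transpose_of_orthonormal Vh₀ hVh₀, norm_smul,
          Real.norm_of_nonneg hh.le]
    _ = ‖h • (P * (F thalf Yhstar - F thalf Yhalf) * Vh₀) - P * E‖ := by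
        rw [sub_eq_add_neg _ (P * E), ← hPE, ← smul_add, Matrix.mul_sub P, Matrix.sub_mul _ _ Vh₀,
          sub_add_cancel]
    _ ≤ h * ‖P * (F thalf Yhstar - F thalf Yhalf) * Vh₀‖ + ‖P * E‖ := by
        refine (norm_sub_le _ _).trans_eq ?_
        rw [norm_smul, Real.norm_of_nonneg hh.le]
    _ ≤ h * L * ‖Yhstar - Yhalf‖ + c * h ^ 3 := by
        rw [mul_assoc]
        gcongr
        exact (frobenius_norm_one_sub_mul_transpose_mul_le hUh₁ E).trans hE

theorem perp_projection_bound (m n p q : ℕ) (h L c thalf : ℝ)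
    (hh : 0 < h) (hL : 0 ≤ L) (hc : 0 ≤ c)
    (Uh₁ : Matrix (Fin m) (Fin q) ℝ) (hUh₁ : Uh₁ᵀ * Uh₁ = 1)
    (Vh₀ : Matrix (Fin n) (Fin p) ℝ) (hVh₀ : Vh₀ᵀ * Vh₀ = 1)
    (F : ℝ → Matrix (Fin m) (Fin n) ℝ → Matrix (Fin m) (Fin n) ℝ)
    (hLip : ∀ t (Z W : Matrix (Fin m) (Fin n) ℝ),
      fro (F t Z - F t W) ≤ L * fro (Z - W))
    (K₀ K₁ E : Matrix (Fin m) (Fin p) ℝ)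
    (Yhalf : Matrix (Fin m) (Fin n) ℝ)
    (hK₀ : (1 - Uh₁ * Uh₁ᵀ) * K₀ = 0)
    (hK₁ : (1 - Uh₁ * Uh₁ᵀ) * K₁ = 0)
    (hKstep : K₁ = K₀ + h • (F thalf Yhalf * Vh₀) + E)
    (hE : fro E ≤ c * h ^ 3) :
    ∀ Yhstar : Matrix (Fin m) (Fin n) ℝ,
      h * fro ((1 - Uh₁ * Uh₁ᵀ) * F thalf Yhstar * (Vh₀ * Vh₀ᵀ)) ≤
        h * L * fro (Yhstar - Yhalf) + c * h ^ 3 :=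
  perp_projection_bound_general m n p q h L c thalf hh Uh₁ hUh₁ Vh₀ hVh₀ F hLip K₀ K₁ E Yhalf hK₀
    hK₁ hKstep hE
end
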